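/- A bipartite graph G is a partial cube if and only if the Djoković–Winkler relation Θ is an equivalence relation on E(G). -/

import Mathlib

open SimpleGraph

universe u

variable {V : Type u}

/-- The Djoković–Winkler relation on ordered pairs of vertices:
`ab Θ xy` iff `d(a,x) + d(b,y) ≠ d(a,y) + d(b,x)`. -/
def ThetaV (G : SimpleGraph V) (a b x y : V) : Prop :=
  G.dist a x + G.dist b y ≠ G.dist a y + G.dist b x

/-- The Djoković–Winkler relation `Θ` on unordered edges. -/
def Theta (G : SimpleGraph V) (e f : Sym2 V) : Prop :=
  ∃ a b x y : V, e = s(a, b) ∧ f = s(x, y) ∧ ThetaV G a b x y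

/-- A partial cube: a connected graph isometrically embeddable into a hypercube,
i.e. there is a map to boolean vectors such that graph distance equals Hamming distance. -/
def IsPartialCube (G : SimpleGraph V) : Prop :=
  G.Connected ∧ ∃ (I : Type u) (h : V → I → Bool),
    ∀ u v : V, {i : I | h u i ≠ h v i}.Finite ∧ G.dist u v = {i : I | h u i ≠ h v i}.ncard

/-- A set of vertices is convex if it contains every shortest path between its members. -/
def IsConvexSet (G : SimpleGraph V) (S : Set V) : Prop :=
  ∀ u ∈ S, ∀ v ∈ S, ∀ p : G.Walk u v, p.length = G.dist u v → ∀ x ∈ p.support, x ∈ S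

/-- `W_{uv}`: vertices strictly closer to `u` than to `v`. -/
def Wset (G : SimpleGraph V) (u v : V) : Set V := {w | G.dist u w < G.dist v w}

/-- `U_{uv}`: vertices of `W_{uv}` with a neighbour in `W_{vu}`. -/
def Uset (G : SimpleGraph V) (u v : V) : Set V :=
  {w | w ∈ Wset G u v ∧ ∃ z, G.Adj w z ∧ z ∈ Wset G v u}

/-- The interval `I(a,b)`: vertices lying on some shortest `a,b`-path. -/
def GInterval (G : SimpleGraph V) (a b : V) : Set V :=
  {x | G.dist a x + G.dist x b = G.dist a b}

/-- An isometric cycle: distances along the cycle agree with distances in `G`. -/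
def IsIsometricCycle (G : SimpleGraph V) {u : V} (c : G.Walk u u) : Prop :=
  c.IsCycle ∧ ∀ i j : ℕ, i ≤ c.length → j ≤ c.length →
    G.dist (c.getVert i) (c.getVert j) =
      min (max i j - min i j) (c.length - (max i j - min i j))

/-- A convex cycle: a cycle whose vertex set is convex. -/
def IsConvexCycle (G : SimpleGraph V) {u : V} (c : G.Walk u u) : Prop :=
  c.IsCycle ∧ IsConvexSet G {x | x ∈ c.support}

/-- `S` and `E` are the vertex set and edge set of an isometric cycle of `G`. -/
def IsIsometricCycleOn (G : SimpleGraph V) (S : Set V) (E : Set (Sym2 V)) : Prop :=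
  ∃ (u : V) (c : G.Walk u u), IsIsometricCycle G c ∧
    S = {x | x ∈ c.support} ∧ E = {e | e ∈ c.edges}

/-- `S` and `E` are the vertex set and edge set of a convex cycle of `G`. -/
def IsConvexCycleOn (G : SimpleGraph V) (S : Set V) (E : Set (Sym2 V)) : Prop :=
  ∃ (u : V) (c : G.Walk u u), IsConvexCycle G c ∧
    S = {x | x ∈ c.support} ∧ E = {e | e ∈ c.edges}

/-- A traverse from the edge `v1u1` to the edge `v2u2`: a sequence of isometric cycles,
given by their vertex sets `S i` and edge sets `E i`, such that `v1u1` lies only on the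
first cycle, `v2u2` lies only on the last one, consecutive cycles meet in exactly one
edge which is `Θ`-related to `v1u1`, non-consecutive cycles are disjoint, and a shortest
`v1,v2`-path of `G` runs along the union of the cycles. -/
def IsTraverse (G : SimpleGraph V) (v1 u1 v2 u2 : V) {n : ℕ}
    (S : Fin n → Set V) (E : Fin n → Set (Sym2 V)) : Prop :=
  1 ≤ n ∧
  (∀ i, IsIsometricCycleOn G (S i) (E i)) ∧
  (∀ i : Fin n, s(v1, u1) ∈ E i ↔ (i : ℕ) = 0) ∧
  (∀ i : Fin n, s(v2, u2) ∈ E i ↔ (i : ℕ) = n - 1) ∧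
  (∀ i j : Fin n, (i : ℕ) + 1 = (j : ℕ) →
    ∃ x y : V, G.Adj x y ∧ Theta G s(x, y) s(v1, u1) ∧
      S i ∩ S j = {x, y} ∧ E i ∩ E j = {s(x, y)}) ∧
  (∀ i j : Fin n, (i : ℕ) + 1 < (j : ℕ) → S i ∩ S j = ∅) ∧
  (∃ p : G.Walk v1 v2, p.length = G.dist v1 v2 ∧ ∀ e ∈ p.edges, ∃ i, e ∈ E i)

/-- A convex traverse: a traverse all of whose cycles are convex. -/
def IsConvexTraverse (G : SimpleGraph V) (v1 u1 v2 u2 : V) {n : ℕ}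
    (S : Fin n → Set V) (E : Fin n → Set (Sym2 V)) : Prop :=
  IsTraverse G v1 u1 v2 u2 S E ∧ ∀ i, IsConvexSet G (S i)

/-- Two cycles intertwine if they share a path with at least two edges and all their
other vertices are pairwise distinct. -/
def Intertwine (G : SimpleGraph V) {a b : V} (c1 : G.Walk a a) (c2 : G.Walk b b) : Prop :=
  ∃ (x y : V) (p : G.Walk x y), p.IsPath ∧ 2 ≤ p.length ∧
    (∀ e ∈ p.edges, e ∈ c1.edges ∧ e ∈ c2.edges) ∧
    {z | z ∈ c1.support} ∩ {z | z ∈ c2.support} = {z | z ∈ p.support}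

/-!
In a Hamming embedding every edge `ab` flips exactly one coordinate `i`, and `d(a,x) - d(b,x)`
is `±1` according to the `i`-th bit of `x` alone; hence `ab Θ xy` iff `ab` and `xy` flip the same
coordinate, and `Θ` is the kernel of the map sending an edge to its coordinate.

Conversely, in a connected bipartite graph no vertex is equidistant from the ends of an edge `ab`,
so `ab Θ xy` iff `xy` crosses the cut `(W_ab, W_ba)`. The edges of a geodesic are pairwise not
`Θ`-related, so if `Θ` is transitive a `u,v`-geodesic crosses the cut of `ab` at most once, and it
does so iff `u` and `v` lie on different sides. Taking as coordinates the `Θ`-classes, with the side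
of `W_ab` for a representative `ab`, the Hamming distance from `u` to `v` is the number of edges
of a `u,v`-geodesic.
-/

section Theta

variable {G : SimpleGraph V} {a b x y : V}

theorem ThetaV.symm (h : ThetaV G a b x y) : ThetaV G x y a b := by
  unfold ThetaV at *
  rw [G.dist_comm (u := x), G.dist_comm (u := y), G.dist_comm (u := x), G.dist_comm (u := y)]
  omega

theorem theta_mk_iff : Theta G s(a, b) s(x, y) ↔ ThetaV G a b x y := by
  refine ⟨?_, fun h ↦ ⟨a, b, x, y, rfl, rfl, h⟩⟩
  rintro ⟨a', b', x', y', he, hf, h⟩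
  rw [Sym2.eq_iff] at he hf
  unfold ThetaV at *
  rcases he with ⟨rfl, rfl⟩ | ⟨rfl, rfl⟩ <;> rcases hf with ⟨rfl, rfl⟩ | ⟨rfl, rfl⟩ <;> omega

theorem Theta.symm {e f : Sym2 V} (h : Theta G e f) : Theta G f e := by
  obtain ⟨a, b, x, y, rfl, rfl, h⟩ := h
  exact theta_mk_iff.mpr h.symm

theorem SimpleGraph.Adj.thetaV_self (h : G.Adj a b) : ThetaV G a b a b := by
  simp [ThetaV, dist_eq_one_iff_adj.mpr h, dist_eq_one_iff_adj.mpr h.symm]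

end Theta

def IsHammingEmbedding (G : SimpleGraph V) {I : Type*} (h : V → I → Bool) : Prop :=
  ∀ u v, {i | h u i ≠ h v i}.Finite ∧ G.dist u v = {i | h u i ≠ h v i}.ncard

theorem Set.ncard_add_ite_eq_ncard_sdiff_add_one {α : Type*} {s : Set α} (hs : s.Finite) (a : α)
    [Decidable (a ∈ s)] :
    s.ncard + (if a ∈ s then 0 else 1) = (s \ {a}).ncard + 1 := by
  split_ifs with ha
  · exact (Set.ncard_sdiff_singleton_add_one ha hs).symm
  · rw [Set.sdiff_singleton_eq_self ha]

namespace IsHammingEmbedding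

variable {G : SimpleGraph V} {I : Type*} {h : V → I → Bool} {a b x y : V} {i₀ i₁ : I}

theorem exists_eq_singleton_of_adj (hh : IsHammingEmbedding G h) (hab : G.Adj a b) :
    ∃ i, {j | h a j ≠ h b j} = {i} :=
  Set.ncard_eq_one.mp <| (hh a b).2.symm.trans (dist_eq_one_iff_adj.mpr hab)

theorem dist_add_ite_eq (hh : IsHammingEmbedding G h) (hab : {j | h a j ≠ h b j} = {i₀})
    (x : V) :
    G.dist a x + (if h a i₀ = h x i₀ then 1 else 0) =
      G.dist b x + (if h b i₀ = h x i₀ then 1 else 0) := by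
  classical
  have hsame : {j | h a j ≠ h x j} \ {i₀} = {j | h b j ≠ h x j} \ {i₀} := by
    ext j
    by_cases hj : j = i₀
    · simp [hj]
    · have : h a j = h b j := not_not.mp fun hne ↦ hj (hab ▸ hne : j ∈ ({i₀} : Set I))
      simp [hj, this]
  have ha := Set.ncard_add_ite_eq_ncard_sdiff_add_one (hh a x).1 i₀
  have hb := Set.ncard_add_ite_eq_ncard_sdiff_add_one (hh b x).1 i₀
  rw [hsame] at ha
  simp only [Set.mem_ofPred_eq, ite_not] at ha hb
  rw [(hh a x).2, (hh b x).2]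
  omega

theorem thetaV_iff (hh : IsHammingEmbedding G h) (hab : {j | h a j ≠ h b j} = {i₀})
    (hxy : {j | h x j ≠ h y j} = {i₁}) : ThetaV G a b x y ↔ i₀ = i₁ := by
  have hx := hh.dist_add_ite_eq hab x
  have hy := hh.dist_add_ite_eq hab y
  have hab₀ : h a i₀ ≠ h b i₀ := (hab ▸ Set.mem_singleton i₀ : i₀ ∈ {j | h a j ≠ h b j})
  rw [← Set.mem_singleton_iff (a := i₀), ← hxy, Set.mem_ofPred_eq, ThetaV]
  revert hx hy hab₀
  cases h a i₀ <;> cases h b i₀ <;> cases h x i₀ <;> cases h y i₀ <;> simp <;> omega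

theorem theta_iff (hh : IsHammingEmbedding G h) (hab : {j | h a j ≠ h b j} = {i₀})
    (hxy : {j | h x j ≠ h y j} = {i₁}) : Theta G s(a, b) s(x, y) ↔ i₀ = i₁ :=
  theta_mk_iff.trans (hh.thetaV_iff hab hxy)

theorem theta_equivalence (hh : IsHammingEmbedding G h) :
    Equivalence (fun e f : G.edgeSet ↦ Theta G e f) := by
  refine ⟨?_, Theta.symm, ?_⟩
  · rintro ⟨e, he⟩
    induction e with
    | _ a b => exact theta_mk_iff.mpr (G.mem_edgeSet.mp he).thetaV_self
  · rintro ⟨e, he⟩ ⟨f, hf⟩ ⟨g, hg⟩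
    induction e with | _ a b => induction f with | _ x y => induction g with | _ z w =>
    obtain ⟨i, hi⟩ := hh.exists_eq_singleton_of_adj (G.mem_edgeSet.mp he)
    obtain ⟨j, hj⟩ := hh.exists_eq_singleton_of_adj (G.mem_edgeSet.mp hf)
    obtain ⟨k, hk⟩ := hh.exists_eq_singleton_of_adj (G.mem_edgeSet.mp hg)
    simp only [hh.theta_iff hi hj, hh.theta_iff hj hk, hh.theta_iff hi hk]
    exact Eq.trans

end IsHammingEmbedding

section Bipartite

variable {G : SimpleGraph V} {a b x y : V}

theorem SimpleGraph.Connected.dist_ne_dist_of_adj (hconn : G.Connected) (hbip : G.Colorable 2)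
    (hab : G.Adj a b) (w : V) : G.dist a w ≠ G.dist b w := by
  obtain ⟨c⟩ := hbip
  let c' := G.recolorOfEquiv finTwoEquiv c
  obtain ⟨p, hp⟩ := hconn.exists_walk_length_eq_dist a w
  obtain ⟨q, hq⟩ := hconn.exists_walk_length_eq_dist b w
  have hpar := c'.even_length_iff_congr p
  have hqar := c'.even_length_iff_congr q
  have hc := c'.valid hab
  intro heq
  rw [hp, heq, ← hq, hqar] at hpar
  revert hpar hc
  cases c' a <;> cases c' b <;> cases c' w <;> simp

theorem thetaV_iff_mem_wset_iff (hconn : G.Connected) (hbip : G.Colorable 2) (hab : G.Adj a b) :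
    ThetaV G a b x y ↔ ¬(x ∈ Wset G a b ↔ y ∈ Wset G a b) := by
  have hx := hconn.dist_ne_dist_of_adj hbip hab x
  have hy := hconn.dist_ne_dist_of_adj hbip hab y
  have hx' := hab.diff_dist_adj (u := x)
  have hy' := hab.diff_dist_adj (u := y)
  simp only [G.dist_comm (v := a), G.dist_comm (v := b)] at hx' hy'
  simp only [ThetaV, Wset, Set.mem_ofPred_eq]
  omega

end Bipartite

section Geodesic

variable {G : SimpleGraph V} {u v w : V}

theorem SimpleGraph.Walk.dist_eq_dist_add_one_of_length_cons_eq_dist (h : G.Adj u w)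
    (q : G.Walk w v) (hp : (q.cons h).length = G.dist u v) {z : V} (hz : z ∈ q.support) :
    G.dist u z = G.dist w z + 1 := by
  classical
  have hsplit : q.cons h = ((q.takeUntil z hz).cons h).append (q.dropUntil z hz) := by
    rw [cons_append, take_spec]
  rw [← length_eq_dist_of_subwalk hp (isSubwalk_of_append_left hsplit),
    ← length_eq_dist_of_subwalk hp ((isSubwalk_takeUntil q hz).cons h), length_cons]

theorem SimpleGraph.Walk.not_theta_of_length_cons_eq_dist (h : G.Adj u w) (q : G.Walk w v)
    (hp : (q.cons h).length = G.dist u v) {f : Sym2 V} (hf : f ∈ q.edges) :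
    ¬Theta G s(u, w) f := by
  induction f with
  | _ x y =>
    have hx := q.dist_eq_dist_add_one_of_length_cons_eq_dist h hp
      (q.fst_mem_support_of_mem_edges hf)
    have hy := q.dist_eq_dist_add_one_of_length_cons_eq_dist h hp
      (q.snd_mem_support_of_mem_edges hf)
    rw [theta_mk_iff, ThetaV, not_not]
    omega

theorem SimpleGraph.Walk.eq_of_theta_of_length_eq_dist (p : G.Walk u v)
    (hp : p.length = G.dist u v) {e f : Sym2 V} (he : e ∈ p.edges) (hf : f ∈ p.edges)
    (hef : Theta G e f) : e = f := by
  induction p with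
  | nil => simp at he
  | cons h q ih =>
    have hq := length_eq_dist_of_subwalk hp (isSubwalk_cons q h)
    rw [edges_cons, List.mem_cons] at he hf
    rcases he with rfl | he <;> rcases hf with rfl | hf
    · rfl
    · exact absurd hef (q.not_theta_of_length_cons_eq_dist h hp hf)
    · exact absurd hef.symm (q.not_theta_of_length_cons_eq_dist h hp he)
    · exact ih hq he hf

theorem SimpleGraph.Walk.mem_wset_iff_of_length_eq_dist (hconn : G.Connected)
    (hbip : G.Colorable 2) (hΘ : Equivalence (fun e f : G.edgeSet ↦ Theta G e f)) {a b : V}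
    (hab : G.Adj a b) (p : G.Walk u v) (hp : p.length = G.dist u v) :
    (u ∈ Wset G a b ↔ v ∈ Wset G a b) ↔ ¬∃ e ∈ p.edges, Theta G s(a, b) e := by
  induction p with
  | nil => simp
  | @cons u w v h q ih =>
    have hq := length_eq_dist_of_subwalk hp (isSubwalk_cons q h)
    have hcross := thetaV_iff_mem_wset_iff (x := u) (y := w) hconn hbip hab
    rw [← theta_mk_iff] at hcross
    simp only [edges_cons, List.mem_cons, exists_eq_or_imp]
    by_cases hθ : Theta G s(a, b) s(u, w)
    · have hnone : ¬∃ e ∈ q.edges, Theta G s(a, b) e := by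
        rintro ⟨e, he, hae⟩
        exact q.not_theta_of_length_cons_eq_dist h hp he <|
          hΘ.trans (x := ⟨s(u, w), h⟩) (y := ⟨s(a, b), hab⟩)
            (z := ⟨e, q.edges_subset_edgeSet he⟩) hθ.symm hae
      rw [← (ih hq).mpr hnone, iff_false_intro (not_not_intro (Or.inl hθ))]
      exact iff_false_intro (hcross.mp hθ)
    · have hside : u ∈ Wset G a b ↔ w ∈ Wset G a b := not_not.mp (hθ ∘ hcross.mpr)
      rw [hside, ih hq, or_iff_right hθ]

end Geodesic

theorem List.Nodup.ncard_setOf_mem {α : Type*} {l : List α} (hl : l.Nodup) :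
    {x | x ∈ l}.ncard = l.length := by
  classical
  rw [← List.coe_toFinset, Set.ncard_coe_finset, List.toFinset_card_of_nodup hl]

theorem exists_isHammingEmbedding_of_theta_equivalence {G : SimpleGraph V} (hconn : G.Connected)
    (hbip : G.Colorable 2) (hΘ : Equivalence (fun e f : G.edgeSet ↦ Theta G e f)) :
    ∃ h : V → Quotient (⟨_, hΘ⟩ : Setoid G.edgeSet) → Bool, IsHammingEmbedding G h := by
  classical
  let S : Setoid G.edgeSet := ⟨_, hΘ⟩
  have hrep : ∀ q : Quotient S, ∃ a b, ∃ hab : G.Adj a b, ⟦⟨s(a, b), hab⟩⟧ = q := by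
    rintro ⟨e, he⟩
    induction e with
    | _ a b => exact ⟨a, b, he, rfl⟩
  choose a b hab hq using hrep
  refine ⟨fun v q ↦ decide (v ∈ Wset G (a q) (b q)), fun u v ↦ ?_⟩
  obtain ⟨p, hp⟩ := hconn.exists_walk_length_eq_dist u v
  let P : Set G.edgeSet := {e | e.1 ∈ p.edges}
  have hchanged : {q | decide (u ∈ Wset G (a q) (b q)) ≠ decide (v ∈ Wset G (a q) (b q))} =
      Quotient.mk S '' P := by
    ext q
    rw [Set.mem_ofPred_eq, ne_eq, decide_eq_decide,
      p.mem_wset_iff_of_length_eq_dist hconn hbip hΘ (hab q) hp, not_not]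
    constructor
    · rintro ⟨e, he, hθ⟩
      exact ⟨⟨e, p.edges_subset_edgeSet he⟩, he, (Quotient.sound hθ.symm).trans (hq q)⟩
    · rintro ⟨e, he, rfl⟩
      exact ⟨e, he, Quotient.exact (hq ⟦e⟧)⟩
  have hinj : Set.InjOn (Quotient.mk S) P := fun e he f hf hef ↦
    Subtype.ext (p.eq_of_theta_of_length_eq_dist hp he hf (Quotient.exact hef))
  have hP : P.ncard = p.length := by
    change (Subtype.val ⁻¹' {e | e ∈ p.edges}).ncard = _
    rw [Set.ncard_preimage_of_injective_subset_range (s := {e | e ∈ p.edges})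
      Subtype.val_injective (fun e he ↦ ⟨⟨e, p.edges_subset_edgeSet he⟩, rfl⟩),
      (p.isPath_of_length_eq_dist hp).edges_nodup.ncard_setOf_mem, p.length_edges]
  rw [hchanged]
  refine ⟨(p.edges.finite_toSet.preimage Subtype.val_injective.injOn).image _, ?_⟩
  rw [hinj.ncard_image, hP, hp]

/-- A (connected) bipartite graph `G` is a partial cube if and only if
the Djoković–Winkler relation `Θ` is an equivalence relation on the edges of `G`. -/
theorem stmt0 (G : SimpleGraph V) (hconn : G.Connected) (hbip : G.Colorable 2) :
    IsPartialCube G ↔ Equivalence (fun e f : G.edgeSet => Theta G e f) := by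
  refine ⟨fun ⟨_, _, _, hh⟩ ↦ IsHammingEmbedding.theta_equivalence hh, fun hΘ ↦ ?_⟩
  obtain ⟨h, hh⟩ := exists_isHammingEmbedding_of_theta_equivalence hconn hbip hΘ
  exact ⟨hconn, _, h, hh⟩
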